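/- For every nonzero real t, every even integer n, and every k ∈ ℕ, |Γ(1/2−it−n/2+k)·Γ(1−2it) / (Γ(1/2−it−n/2)·Γ(1−2it+k))| ≤ Π_{j=1}^{k} (1 + (|n|/2+1)/j). (Equivalently, the left-hand side equals |Π_{j=1}^{k} (j − 1/2 − it − n/2)/(j − 2it)|, and each factor has modulus at most 1 + (|n|/2+1)/j.) -/

import Mathlib

/-!
Since `Γ(s + 1) = s Γ(s)`, the quotient is `∏_{j<k} (a + j)/(b + j)` with
`a = 1/2 - it - n/2` and `b = 1 - 2it`, unless `a` is a pole of `Γ`, in which case the junk value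
`Γ(a) = 0` makes it vanish. With `c = 1 + (|n|/2 + 1)/(j + 1)` one has
`|Re(a + j)| ≤ j + 1/2 + |n|/2 ≤ c Re(b + j)` and `|Im(a + j)| = |t| ≤ c |Im(b + j)|`,
hence `‖a + j‖ ≤ c ‖b + j‖`.
-/

open Finset

theorem ascPochhammer_eval_eq_prod_range {S : Type*} [CommSemiring S] (n : ℕ) (s : S) :
    (ascPochhammer S n).eval s = ∏ j ∈ range n, (s + j) := by
  induction n with
  | zero => simp
  | succ n ih => rw [ascPochhammer_succ_eval, ih, prod_range_succ]

theorem prod_Icc_one_eq_prod_range {M : Type*} [CommMonoid M] (f : ℕ → M) (k : ℕ) :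
    ∏ j ∈ Icc 1 k, f j = ∏ j ∈ range k, f (j + 1) := by
  rw [← Ico_add_one_right_eq_Icc, prod_Ico_eq_prod_range, Nat.add_sub_cancel]
  simp only [add_comm 1]

namespace Complex

theorem ne_neg_natCast_of_re_pos {s : ℂ} (hs : 0 < s.re) (m : ℕ) : s ≠ -m := fun h => by
  rw [h, neg_re, natCast_re] at hs
  linarith [m.cast_nonneg (α := ℝ)]

theorem Gamma_add_nat_mul_div_eq_prod {a b : ℂ} (ha : ∀ m : ℕ, a ≠ -m) (hb : ∀ m : ℕ, b ≠ -m)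
    (k : ℕ) :
    Gamma (a + k) * Gamma b / (Gamma a * Gamma (b + k)) = ∏ j ∈ range k, (a + j) / (b + j) := by
  rw [mul_div_mul_comm, ← inv_div (Gamma (b + k)), Gamma_add_nat_div_Gamma_eq a ha,
    Gamma_add_nat_div_Gamma_eq b hb, ascPochhammer_eval_eq_prod_range,
    ascPochhammer_eval_eq_prod_range, ← div_eq_mul_inv, prod_div_distrib]

theorem norm_le_mul_norm_of_abs_re_le_of_abs_im_le {z w : ℂ} {c : ℝ} (hc : 0 ≤ c)
    (hre : |z.re| ≤ c * |w.re|) (him : |z.im| ≤ c * |w.im|) : ‖z‖ ≤ c * ‖w‖ := by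
  refine (pow_le_pow_iff_left₀ (norm_nonneg z) (by positivity) two_ne_zero).mp ?_
  rw [mul_pow, Complex.sq_norm, Complex.sq_norm, normSq_apply, normSq_apply]
  nlinarith [sq_abs z.re, sq_abs z.im, sq_abs w.re, sq_abs w.im,
    mul_le_mul hre hre (abs_nonneg _) (by positivity),
    mul_le_mul him him (abs_nonneg _) (by positivity)]

theorem norm_half_sub_div_one_sub_add_nat_le (t n : ℝ) (j : ℕ) :
    ‖(1 / 2 - I * t - n / 2 + j) / (1 - 2 * I * t + j)‖ ≤ 1 + (|n| / 2 + 1) / (j + 1) := by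
  have hz_re : (1 / 2 - I * t - n / 2 + j : ℂ).re = 1 / 2 - n / 2 + j := by simp
  have hz_im : (1 / 2 - I * t - n / 2 + j : ℂ).im = -t := by simp
  have hw_re : (1 - 2 * I * t + j : ℂ).re = j + 1 := by simp [add_comm]
  have hw_im : (1 - 2 * I * t + j : ℂ).im = -(2 * t) := by simp
  have hj : (0 : ℝ) < j + 1 := by positivity
  have hc : 1 ≤ 1 + (|n| / 2 + 1) / (j + 1) := le_add_of_nonneg_right (by positivity)
  have hw : (1 - 2 * I * t + j : ℂ) ≠ 0 := ne_zero_of_re_pos (hw_re ▸ hj)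
  rw [norm_div, div_le_iff₀ (norm_pos_iff.mpr hw)]
  refine norm_le_mul_norm_of_abs_re_le_of_abs_im_le (by linarith) ?_ ?_
  · have hcj : (1 + (|n| / 2 + 1) / (j + 1)) * (j + 1) = j + 1 + (|n| / 2 + 1) := by
      field_simp
    rw [hz_re, hw_re, abs_of_pos hj, hcj, abs_le]
    constructor <;> linarith [le_abs_self n, neg_abs_le n]
  · rw [hz_im, hw_im, abs_neg, abs_neg, abs_mul, abs_two]
    nlinarith [abs_nonneg t]

end Complex

open Complex in
theorem stmt14_general (t : ℝ) (n : ℤ) (k : ℕ) :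
    Norm.norm
        (Complex.Gamma ((1 : ℂ) / 2 - Complex.I * (t : ℂ) - (n : ℂ) / 2 + (k : ℂ)) *
            Complex.Gamma (1 - 2 * Complex.I * (t : ℂ)) /
          (Complex.Gamma ((1 : ℂ) / 2 - Complex.I * (t : ℂ) - (n : ℂ) / 2) *
            Complex.Gamma (1 - 2 * Complex.I * (t : ℂ) + (k : ℂ)))) ≤
      ∏ j ∈ Finset.Icc 1 k, (1 + (|(n : ℝ)| / 2 + 1) / (j : ℝ)) := by
  have hb : ∀ m : ℕ, 1 - 2 * I * t ≠ -m := ne_neg_natCast_of_re_pos (by simp)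
  by_cases ha : ∀ m : ℕ, (1 : ℂ) / 2 - I * t - n / 2 ≠ -m
  · rw [Gamma_add_nat_mul_div_eq_prod ha hb, norm_prod, prod_Icc_one_eq_prod_range]
    gcongr with j
    push_cast
    exact_mod_cast norm_half_sub_div_one_sub_add_nat_le t n j
  · push Not at ha
    rw [(Gamma_eq_zero_iff _).mpr ha, zero_mul, div_zero, norm_zero]
    positivity

/-- For every nonzero real `t`, every even integer `n`, and every `k : ℕ`,
`|Γ(1/2 - it - n/2 + k) Γ(1 - 2it) / (Γ(1/2 - it - n/2) Γ(1 - 2it + k))|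
  ≤ ∏_{j=1}^{k} (1 + (|n|/2 + 1)/j)`. -/
theorem stmt14 (t : ℝ) (ht : t ≠ 0) (n : ℤ) (hn : Even n) (k : ℕ) :
    Norm.norm
        (Complex.Gamma ((1 : ℂ) / 2 - Complex.I * (t : ℂ) - (n : ℂ) / 2 + (k : ℂ)) *
            Complex.Gamma (1 - 2 * Complex.I * (t : ℂ)) /
          (Complex.Gamma ((1 : ℂ) / 2 - Complex.I * (t : ℂ) - (n : ℂ) / 2) *
            Complex.Gamma (1 - 2 * Complex.I * (t : ℂ) + (k : ℂ)))) ≤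
      ∏ j ∈ Finset.Icc 1 k, (1 + (|(n : ℝ)| / 2 + 1) / (j : ℝ)) :=
  stmt14_general t n k
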